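/- arXiv:1305.3102 — 2 statements merged into one kernel-verified Lean document; each statement's English description precedes it below -/
import Mathlib

section
/- Every graph G' obtained as the inflation of a graph G by k has a minimum-width path decomposition in which, for every v ∈ V(G), each bag either contains all k copies of v or none of them. -/
open SimpleGraph

/-- A path decomposition of a graph `G`: a finite sequence of bags covering all
vertices and edges, in which each vertex occurs in a consecutive set of bags. -/
structure PathDecomp {V : Type*} (G : SimpleGraph V) where
  n : ℕ
  bag : Fin n → Finset V
  mem_bag : ∀ v : V, ∃ i, v ∈ bag i
  adj_bag : ∀ u v : V, G.Adj u v → ∃ i, u ∈ bag i ∧ v ∈ bag i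
  convex : ∀ v : V, ∀ i j l : Fin n, i ≤ j → j ≤ l → v ∈ bag i → v ∈ bag l → v ∈ bag j

/-- The width of a path decomposition: maximum bag size minus one. -/
def PathDecomp.width {V : Type*} {G : SimpleGraph V} (P : PathDecomp G) : ℕ :=
  (Finset.univ.sup fun i => (P.bag i).card) - 1

/-- Pathwidth: the minimum width over all path decompositions. -/
noncomputable def pathwidth {V : Type*} (G : SimpleGraph V) : ℕ :=
  sInf {w | ∃ P : PathDecomp G, P.width = w}

/-- The inflation `G ⋄ k`: each vertex is replaced by a `k`-clique, with complete
connections between the cliques of adjacent vertices. -/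
def inflate {V : Type*} (G : SimpleGraph V) (k : ℕ) : SimpleGraph (V × Fin k) :=
  SimpleGraph.fromRel fun x y => x.1 = y.1 ∨ G.Adj x.1 y.1


/-! Take any minimum-width path decomposition of `G ⋄ k` and shrink each bag to the vertices all
of whose copies it contains. Bags only shrink, so the width does not grow; the result is still a
path decomposition because the copies of a vertex, and the copies of two adjacent vertices, form
cliques of `G ⋄ k`, and every clique of a graph lies inside a single bag (the Helly property of
intervals). -/

namespace PathDecomp

variable {V : Type*} {G : SimpleGraph V}

theorem exists_first_bag (P : PathDecomp G) (v : V) :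
    ∃ i, v ∈ P.bag i ∧ ∀ j, v ∈ P.bag j → i ≤ j := by
  obtain ⟨i, hi, hmin⟩ := wellFounded_lt.has_min {i | v ∈ P.bag i} (P.mem_bag v)
  exact ⟨i, hi, fun j hj => not_lt.mp (hmin j hj)⟩

/-- Witness: the first bag of the vertex of `S` whose first bag comes latest. -/
theorem exists_bag_superset_of_isClique (P : PathDecomp G) {S : Finset V} (hS : S.Nonempty)
    (hclique : G.IsClique (S : Set V)) : ∃ i, S ⊆ P.bag i := by
  choose first mem_first first_le using P.exists_first_bag
  obtain ⟨w, hw, hlast⟩ := S.exists_max_image first hS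
  refine ⟨first w, fun x hx => ?_⟩
  obtain rfl | hxw := eq_or_ne x w
  · exact mem_first x
  obtain ⟨m, hxm, hwm⟩ := P.adj_bag x w (hclique hx hw hxw)
  exact P.convex x _ _ _ (hlast x hx) (first_le w m hwm) (mem_first x) hxm

end PathDecomp

section Inflate

variable {V : Type*} {G : SimpleGraph V} {k : ℕ}

theorem inflate_adj {x y : V × Fin k} :
    (inflate G k).Adj x y ↔ x ≠ y ∧ (x.1 = y.1 ∨ G.Adj x.1 y.1) := by
  rw [inflate, fromRel_adj]
  refine and_congr_right fun _ => ⟨?_, Or.inl⟩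
  rintro (h | h | h) <;> simp_all [G.adj_comm]

theorem isClique_inflate {T : Set V} (hT : G.IsClique T) :
    (inflate G k).IsClique (T ×ˢ Set.univ) := by
  rintro x hx y hy hxy
  refine inflate_adj.mpr ⟨hxy, ?_⟩
  by_cases h : x.1 = y.1
  · exact Or.inl h
  · exact Or.inr (hT hx.1 hy.1 h)

theorem PathDecomp.exists_bag_copies_subset (P : PathDecomp (inflate G k)) {T : Finset V}
    (hT : T.Nonempty) (hk : k ≠ 0) (hclique : G.IsClique (T : Set V)) :
    ∃ i, T ×ˢ Finset.univ ⊆ P.bag i := by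
  have : NeZero k := ⟨hk⟩
  refine P.exists_bag_superset_of_isClique (hT.product Finset.univ_nonempty) ?_
  rw [Finset.coe_product, Finset.coe_univ]
  exact isClique_inflate hclique

open Classical in
noncomputable def PathDecomp.fullCopies (P : PathDecomp (inflate G k)) :
    PathDecomp (inflate G k) where
  n := P.n
  bag i := (P.bag i).filter fun x => ∀ j, (x.1, j) ∈ P.bag i
  mem_bag := by
    rintro ⟨v, j⟩
    obtain ⟨i, hi⟩ := P.exists_bag_copies_subset (Finset.singleton_nonempty v)
      (Fin.pos j).ne' (by simp)
    exact ⟨i, Finset.mem_filter.mpr ⟨hi (by simp), fun j' => hi (by simp)⟩⟩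
  adj_bag := by
    rintro x y hxy
    obtain ⟨i, hi⟩ := P.exists_bag_copies_subset (T := {x.1, y.1}) (Finset.insert_nonempty _ _)
      (Fin.pos x.2).ne' (by
        rw [Finset.coe_pair, isClique_pair]
        exact fun hne => ((inflate_adj.mp hxy).2.resolve_left hne))
    have hcopies : ∀ z ∈ ({x.1, y.1} : Finset V), ∀ j, (z, j) ∈ P.bag i :=
      fun z hz j => hi (Finset.mem_product.mpr ⟨hz, Finset.mem_univ j⟩)
    refine ⟨i, ?_, ?_⟩ <;> refine Finset.mem_filter.mpr ⟨?_, hcopies _ (by simp)⟩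
    · exact hcopies x.1 (by simp) x.2
    · exact hcopies y.1 (by simp) y.2
  convex := by
    intro x a b c hab hbc ha hc
    have hall : ∀ j, (x.1, j) ∈ P.bag b := fun j =>
      P.convex _ a b c hab hbc ((Finset.mem_filter.mp ha).2 j) ((Finset.mem_filter.mp hc).2 j)
    exact Finset.mem_filter.mpr ⟨hall x.2, hall⟩

theorem PathDecomp.mem_fullCopies_bag {P : PathDecomp (inflate G k)} {i : Fin P.n}
    {v : V} {j : Fin k} : (v, j) ∈ P.fullCopies.bag i ↔ ∀ j', (v, j') ∈ P.bag i := by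
  classical
  simp only [fullCopies, Finset.mem_filter, and_iff_right_iff_imp]
  exact fun h => h j

theorem PathDecomp.fullCopies_uniform (P : PathDecomp (inflate G k)) (v : V) (i : Fin P.n) :
    (∀ j, (v, j) ∈ P.fullCopies.bag i) ∨ (∀ j, (v, j) ∉ P.fullCopies.bag i) := by
  simp only [mem_fullCopies_bag]
  by_cases h : ∀ j', (v, j') ∈ P.bag i
  · exact Or.inl fun _ => h
  · exact Or.inr fun _ => h

theorem PathDecomp.width_fullCopies_le (P : PathDecomp (inflate G k)) :
    P.fullCopies.width ≤ P.width := by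
  classical
  refine Nat.sub_le_sub_right (Finset.sup_mono_fun fun i _ => Finset.card_le_card ?_) 1
  exact Finset.filter_subset _ _

end Inflate

theorem pathwidth_le_width {V : Type*} {G : SimpleGraph V} (P : PathDecomp G) :
    pathwidth G ≤ P.width :=
  Nat.sInf_le ⟨P, rfl⟩

theorem exists_width_eq_pathwidth {V : Type*} [Fintype V] (G : SimpleGraph V) :
    ∃ P : PathDecomp G, P.width = pathwidth G := by
  let single : PathDecomp G :=
    ⟨1, fun _ => Finset.univ, fun _ => ⟨0, Finset.mem_univ _⟩,
      fun _ _ _ => ⟨0, Finset.mem_univ _, Finset.mem_univ _⟩,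
      fun _ _ _ _ _ _ _ _ => Finset.mem_univ _⟩
  exact Nat.sInf_mem (s := {w | ∃ P : PathDecomp G, P.width = w}) ⟨_, single, rfl⟩

/-- Every inflation `G ⋄ k` has a minimum-width path decomposition in which each
bag contains either all `k` copies of a vertex of `G` or none of them. -/
theorem inflate_min_width_decomp_uniform {V : Type*} [Fintype V]
    (G : SimpleGraph V) (k : ℕ) :
    ∃ P : PathDecomp (inflate G k), P.width = pathwidth (inflate G k) ∧
      ∀ (v : V) (i : Fin P.n),
        (∀ j : Fin k, (v, j) ∈ P.bag i) ∨ (∀ j : Fin k, (v, j) ∉ P.bag i) := by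
  obtain ⟨P, hP⟩ := exists_width_eq_pathwidth (inflate G k)
  refine ⟨P.fullCopies, le_antisymm ?_ (pathwidth_le_width _), P.fullCopies_uniform⟩
  exact hP ▸ P.width_fullCopies_le
end

section
/- In the cross-composed graph G' (the inflation of 𝕋̃^s by k with each leaf-clique replaced by an input graph G_i joined to the copies of the leaf's parent), if every input graph G_i has pathwidth at least k − 1, then pw(G') ≥ k(s+2) − 1. -/
open SimpleGraph

/-- Addresses of vertices of the complete ternary tree `𝕋^s` of height `s`. -/
def TreeVert (s : ℕ) : Type := {l : List (Fin 3) // l.length ≤ s}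

/-- Addresses of the leaves of `𝕋^s` (equivalently, indices of the pendant
leaves `x^i` of `𝕋̃^s`, whose parents `y^i` are the leaves of `𝕋^s`). -/
def LeafIdx (s : ℕ) : Type := {l : List (Fin 3) // l.length = s}

/-- The cross-composed graph `G'`: the inflation of `𝕋̃^s` by `k` in which, for
each pendant leaf `x^i`, the `k`-clique of copies of `x^i` is replaced by the
input graph `G_i`, completely joined to the `k` copies of the parent `y^i`.
The remaining tree part is the inflation of `𝕋^s` by `k`. -/
def crossComposed (s k : ℕ) {U : Type} (G : LeafIdx s → SimpleGraph U) :
    SimpleGraph ((TreeVert s × Fin k) ⊕ (LeafIdx s × U)) :=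
  SimpleGraph.fromRel fun x y =>
    (∃ p q : TreeVert s × Fin k, x = Sum.inl p ∧ y = Sum.inl q ∧
      (p.1.1 = q.1.1 ∨ ∃ a : Fin 3, q.1.1 = p.1.1 ++ [a])) ∨
    (∃ (l : LeafIdx s) (u u' : U), x = Sum.inr (l, u) ∧ y = Sum.inr (l, u') ∧
      (G l).Adj u u') ∨
    (∃ (l : LeafIdx s) (u : U) (q : TreeVert s × Fin k),
      x = Sum.inr (l, u) ∧ y = Sum.inl q ∧ q.1.1 = l.1)

/-!
Fix a path decomposition of `G'`. The `k` clones of a vertex `v` of `𝕋^s` form a clique, so by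
the one-dimensional Helly theorem the bags containing all of them form a nonempty interval `B v`,
and `B v` meets `B w` when `w` is a child of `v`; hence for every subtree the union of the `B v`
over its vertices is again an interval. Pulling the decomposition back to `G_i` and clamping the
bag indices into `B y^i` gives a decomposition of `G_i`, so some bag in `B y^i` holds `k` vertices
of `G_i` besides the `k` clones of `y^i`. Going up the tree, pick for each of the three children
of a node such a rich bag for the child's subtree and look at the middle one: it lies in the
interval formed by `B` of the node and the unions for the other two subtrees, so it also holds `k`
clones of a vertex outside its own subtree. Each level adds `k`, and at the root some bag has
`k(s + 2)` vertices.
-/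

open Finset

namespace Set

variable {α : Type*} [LinearOrder α]

theorem OrdConnected.union_of_inter_nonempty {s t : Set α} (hs : s.OrdConnected)
    (ht : t.OrdConnected) (hst : (s ∩ t).Nonempty) : (s ∪ t).OrdConnected := by
  obtain ⟨p, hps, hpt⟩ := hst
  refine ⟨fun x hx y hy z hz => ?_⟩
  rcases hx with hx | hx <;> rcases hy with hy | hy
  · exact Or.inl (hs.out hx hy hz)
  · rcases le_total z p with h | h
    · exact Or.inl (hs.out hx hps ⟨hz.1, h⟩)
    · exact Or.inr (ht.out hpt hy ⟨h, hz.2⟩)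
  · rcases le_total z p with h | h
    · exact Or.inr (ht.out hx hpt ⟨hz.1, h⟩)
    · exact Or.inl (hs.out hps hy ⟨h, hz.2⟩)
  · exact Or.inr (ht.out hx hy hz)

theorem OrdConnected.union_iUnion {ι : Type*} {s : Set α} {t : ι → Set α}
    (hs : s.OrdConnected) (ht : ∀ i, (t i).OrdConnected) (hst : ∀ i, (s ∩ t i).Nonempty) :
    (s ∪ ⋃ i, t i).OrdConnected := by
  have hpair : ∀ i j, (s ∪ t i ∪ t j).OrdConnected := fun i j =>
    ((hs.union_of_inter_nonempty (ht i) (hst i)).union_of_inter_nonempty (ht j)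
      ((hst j).mono (inter_subset_inter_left _ subset_union_left)))
  have hsub : ∀ i j, s ∪ t i ∪ t j ⊆ s ∪ ⋃ i, t i := fun i j =>
    union_subset (union_subset_union_right _ (subset_iUnion t i))
      (subset_union_of_subset_right (subset_iUnion t j) _)
  refine ⟨fun x hx y hy => ?_⟩
  rcases hx with hx | hx <;> rcases hy with hy | hy
  · exact (hs.out hx hy).trans subset_union_left
  · obtain ⟨j, hy⟩ := mem_iUnion.mp hy
    exact ((hpair j j).out (Or.inl (Or.inl hx)) (Or.inr hy)).trans (hsub j j)
  · obtain ⟨i, hx⟩ := mem_iUnion.mp hx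
    exact ((hpair i i).out (Or.inr hx) (Or.inl (Or.inl hy))).trans (hsub i i)
  · obtain ⟨i, hx⟩ := mem_iUnion.mp hx
    obtain ⟨j, hy⟩ := mem_iUnion.mp hy
    exact ((hpair i j).out (Or.inl (Or.inr hx)) (Or.inr hy)).trans (hsub i j)

/-- Helly's theorem in dimension one. -/
theorem nonempty_iInter_of_ordConnected {ι : Type*} [Finite ι] [Nonempty ι] {s : ι → Set α}
    (hs : ∀ i, (s i).OrdConnected) (h : ∀ i j, (s i ∩ s j).Nonempty) :
    (⋂ i, s i).Nonempty := by
  have := Fintype.ofFinite ι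
  choose p hp using h
  -- `m i` is the leftmost of the chosen meeting points of `s i`; the rightmost `m i` is common.
  let m i := Finset.univ.inf' Finset.univ_nonempty (p i)
  obtain ⟨i₀, -, hi₀⟩ := exists_mem_eq_sup' Finset.univ_nonempty m
  refine ⟨Finset.univ.sup' Finset.univ_nonempty m, mem_iInter.mpr fun i => ?_⟩
  have hmi : m i ∈ s i := by
    obtain ⟨j, -, hj⟩ := exists_mem_eq_inf' Finset.univ_nonempty (p i)
    rw [show m i = p i j from hj]
    exact (hp i j).1
  exact (hs i).out hmi (hp i₀ i).2
    ⟨le_sup' m (Finset.mem_univ i), hi₀ ▸ inf'_le _ (Finset.mem_univ i)⟩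

end Set

namespace List

variable {α : Type*}

theorem eq_of_append_singleton_prefix {l m : List α} {a b : α} (ha : l ++ [a] <+: m)
    (hb : l ++ [b] <+: m) : a = b := by
  have key : l ++ [a] = l ++ [b] := by
    rcases prefix_or_prefix_of_prefix ha hb with h | h
    · exact h.eq_of_length (by simp)
    · exact (h.eq_of_length (by simp)).symm
  simpa using key

theorem IsPrefix.eq_or_append_singleton_prefix {l m : List α} (h : l <+: m) :
    m = l ∨ ∃ a, l ++ [a] <+: m := by
  obtain ⟨_ | ⟨a, t⟩, rfl⟩ := h
  · simp
  · exact Or.inr ⟨a, t, by simp⟩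

end List

namespace PathDecomp

variable {V W : Type*} {G : SimpleGraph V} {H : SimpleGraph W}

def support (P : PathDecomp G) (v : V) : Set (Fin P.n) := {i | v ∈ P.bag i}

theorem ordConnected_support (P : PathDecomp G) (v : V) : (P.support v).OrdConnected :=
  ⟨fun i hi l hl j hj => P.convex v i j l hj.1 hj.2 hi hl⟩

theorem exists_forall_mem_bag_of_clique (P : PathDecomp G) {ι : Type*} [Finite ι] [Nonempty ι]
    {f : ι → V} (hf : ∀ i j, f i = f j ∨ G.Adj (f i) (f j)) :
    ∃ x, ∀ i, f i ∈ P.bag x := by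
  obtain ⟨x, hx⟩ := Set.nonempty_iInter_of_ordConnected (fun i => P.ordConnected_support (f i))
    fun i j => by
      rcases hf i j with h | h
      · obtain ⟨x, hx⟩ := P.mem_bag (f i)
        exact ⟨x, hx, h ▸ hx⟩
      · exact P.adj_bag _ _ h
  exact ⟨x, fun i => Set.mem_iInter.mp hx i⟩

noncomputable def comap (P : PathDecomp G) (f : H →g G) (hf : Function.Injective f) :
    PathDecomp H where
  n := P.n
  bag i := (P.bag i).preimage f hf.injOn
  mem_bag v := by simpa using P.mem_bag (f v)
  adj_bag u v h := by simpa using P.adj_bag _ _ (f.map_adj h)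
  convex v i j l hij hjl := by simpa using P.convex (f v) i j l hij hjl

@[simp]
theorem mem_comap_bag {P : PathDecomp G} {f : H →g G} {hf : Function.Injective f}
    {i : Fin P.n} {w : W} : w ∈ (P.comap f hf).bag i ↔ f w ∈ P.bag i := by
  simp [comap]

def clampIcc (P : PathDecomp G) {a b : Fin P.n} (hab : a ≤ b)
    (hv : ∀ v, ∃ i ∈ Set.Icc a b, v ∈ P.bag i)
    (he : ∀ u v, G.Adj u v → ∃ i ∈ Set.Icc a b, u ∈ P.bag i ∧ v ∈ P.bag i) :
    PathDecomp G where
  n := P.n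
  bag i := P.bag (Set.projIcc a b hab i)
  mem_bag v := by
    obtain ⟨i, hi, hvi⟩ := hv v
    exact ⟨i, by rwa [Set.projIcc_of_mem hab hi]⟩
  adj_bag u v huv := by
    obtain ⟨i, hi, hui⟩ := he u v huv
    exact ⟨i, by rwa [Set.projIcc_of_mem hab hi]⟩
  convex v i j l hij hjl :=
    P.convex v _ _ _ (Set.monotone_projIcc hab hij) (Set.monotone_projIcc hab hjl)

theorem pathwidth_le_width (P : PathDecomp G) : pathwidth G ≤ P.width :=
  Nat.sInf_le ⟨P, rfl⟩

theorem card_bag_sub_one_le_width (P : PathDecomp G) (i : Fin P.n) : #(P.bag i) - 1 ≤ P.width :=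
  Nat.sub_le_sub_right (le_sup (f := fun i => #(P.bag i)) (mem_univ i)) 1

theorem exists_width_eq (P : PathDecomp G) [Nonempty (Fin P.n)] :
    ∃ j, P.width = #(P.bag j) - 1 := by
  obtain ⟨j, -, hj⟩ := exists_mem_eq_sup univ univ_nonempty fun i => #(P.bag i)
  exact ⟨j, congrArg (· - 1) hj⟩

theorem exists_mem_pathwidth_le_of_ordConnected (P : PathDecomp G) {J : Set (Fin P.n)}
    (hJ : J.OrdConnected) (hJne : J.Nonempty) (hv : ∀ v, ∃ i ∈ J, v ∈ P.bag i)
    (he : ∀ u v, G.Adj u v → ∃ i ∈ J, u ∈ P.bag i ∧ v ∈ P.bag i) :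
    ∃ i ∈ J, pathwidth G ≤ #(P.bag i) - 1 := by
  obtain ⟨a, ha, hamin⟩ := J.exists_min_image id J.toFinite hJne
  obtain ⟨b, hb, hbmax⟩ := J.exists_max_image id J.toFinite hJne
  have hJab : J ⊆ Set.Icc a b := fun i hi => ⟨hamin i hi, hbmax i hi⟩
  let Q := P.clampIcc (hamin b hb) (fun v => (hv v).imp fun _ h => ⟨hJab h.1, h.2⟩)
    (fun u v huv => (he u v huv).imp fun _ h => ⟨hJab h.1, h.2⟩)
  have : Nonempty (Fin Q.n) := ⟨a⟩
  obtain ⟨i, hi⟩ := Q.exists_width_eq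
  exact ⟨_, hJ.out ha hb (Set.projIcc a b _ i).2, hi ▸ Q.pathwidth_le_width⟩

theorem le_pathwidth_of_forall_le_width [Finite V] {m : ℕ}
    (h : ∀ P : PathDecomp G, m ≤ P.width) : m ≤ pathwidth G := by
  have := Fintype.ofFinite V
  let P₁ : PathDecomp G :=
    ⟨1, fun _ => univ, fun v => ⟨0, mem_univ v⟩, fun u v _ => ⟨0, mem_univ u, mem_univ v⟩,
      fun v _ _ _ _ _ _ _ => mem_univ v⟩
  exact le_csInf ⟨_, P₁, rfl⟩ (by rintro _ ⟨P, rfl⟩; exact h P)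

end PathDecomp

instance (s : ℕ) : Finite (TreeVert s) := (List.finite_length_le (Fin 3) s).to_subtype

instance (s : ℕ) : Finite (LeafIdx s) := (List.finite_length_eq (Fin 3) s).to_subtype

/-- The leaf `y^i` of `𝕋^s` to which the pendant leaf `x^i` is attached. -/
def LeafIdx.parent {s : ℕ} (lf : LeafIdx s) : TreeVert s := ⟨lf.1, lf.2.le⟩

section crossComposed

variable {s k : ℕ} {U : Type} {G : LeafIdx s → SimpleGraph U}

theorem crossComposed_adj_clone (v : TreeVert s) {i j : Fin k} (h : i ≠ j) :
    (crossComposed s k G).Adj (.inl (v, i)) (.inl (v, j)) := by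
  rw [crossComposed, fromRel_adj]
  exact ⟨by simp [h], Or.inl (Or.inl ⟨(v, i), (v, j), rfl, rfl, Or.inl rfl⟩)⟩

theorem crossComposed_adj_clone_child {v w : TreeVert s} {a : Fin 3} (h : w.1 = v.1 ++ [a])
    (i j : Fin k) : (crossComposed s k G).Adj (.inl (v, i)) (.inl (w, j)) := by
  rw [crossComposed, fromRel_adj]
  refine ⟨fun hvw => ?_, Or.inl (Or.inl ⟨(v, i), (w, j), rfl, rfl, Or.inr ⟨a, h⟩⟩)⟩
  obtain rfl : v = w := congrArg Prod.fst (Sum.inl_injective hvw)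
  simpa using congrArg List.length h

theorem crossComposed_adj_gadget_parent (lf : LeafIdx s) (u : U) (j : Fin k) :
    (crossComposed s k G).Adj (.inr (lf, u)) (.inl (lf.parent, j)) := by
  rw [crossComposed, fromRel_adj]
  exact ⟨by simp, Or.inl (Or.inr (Or.inr ⟨lf, u, (lf.parent, j), rfl, rfl, rfl⟩))⟩

theorem crossComposed_adj_gadget {lf : LeafIdx s} {u u' : U} (h : (G lf).Adj u u') :
    (crossComposed s k G).Adj (.inr (lf, u)) (.inr (lf, u')) := by
  rw [crossComposed, fromRel_adj]
  exact ⟨by simp [h.ne], Or.inl (Or.inr (Or.inl ⟨lf, u, u', rfl, rfl, h⟩))⟩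

def gadgetHom (lf : LeafIdx s) : G lf →g crossComposed s k G :=
  ⟨fun u => .inr (lf, u), crossComposed_adj_gadget⟩

theorem gadgetHom_injective (lf : LeafIdx s) :
    Function.Injective (gadgetHom (k := k) (G := G) lf) :=
  fun u u' h => by simpa [gadgetHom] using h

end crossComposed

section TreeAddresses

variable {s k : ℕ} {U : Type}

def treeAddr : (TreeVert s × Fin k) ⊕ (LeafIdx s × U) → List (Fin 3) :=
  Sum.elim (fun p => p.1.1) (fun p => p.1.1)

def clones (v : TreeVert s) : Finset ((TreeVert s × Fin k) ⊕ (LeafIdx s × U)) :=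
  univ.map ((Function.Embedding.sectR v (Fin k)).trans .inl)

theorem card_clones (v : TreeVert s) : #(clones (k := k) (U := U) v) = k := by
  simp [clones]

theorem treeAddr_of_mem_clones {v : TreeVert s} {w : (TreeVert s × Fin k) ⊕ (LeafIdx s × U)}
    (hw : w ∈ clones v) : treeAddr w = v.1 := by
  obtain ⟨j, -, rfl⟩ := mem_map.mp hw
  rfl

end TreeAddresses

namespace PathDecomp

variable {s k : ℕ} {U : Type} {G : LeafIdx s → SimpleGraph U}
  (P : PathDecomp (crossComposed s k G))

def cloneBags (v : TreeVert s) : Set (Fin P.n) := ⋂ j : Fin k, P.support (.inl (v, j))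

def subtreeCloneBags (l : List (Fin 3)) : Set (Fin P.n) :=
  ⋃ (v : TreeVert s) (_ : l <+: v.1), P.cloneBags v

noncomputable def gadgetDecomp (lf : LeafIdx s) : PathDecomp (G lf) :=
  P.comap (gadgetHom lf) (gadgetHom_injective lf)

def bagInSubtree (l : List (Fin 3)) (i : Fin P.n) :
    Finset ((TreeVert s × Fin k) ⊕ (LeafIdx s × U)) :=
  (P.bag i).filter fun w => l <+: treeAddr w

variable {P}

theorem mem_gadgetDecomp_bag {lf : LeafIdx s} {i : Fin P.n} {u : U} :
    u ∈ (P.gadgetDecomp lf).bag i ↔ .inr (lf, u) ∈ P.bag i :=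
  mem_comap_bag

theorem mem_cloneBags {v : TreeVert s} {i : Fin P.n} :
    i ∈ P.cloneBags v ↔ ∀ j, .inl (v, j) ∈ P.bag i :=
  Set.mem_iInter

theorem clones_subset_bag {v : TreeVert s} {i : Fin P.n} (hi : i ∈ P.cloneBags v) :
    clones v ⊆ P.bag i := by
  intro w hw
  obtain ⟨j, -, rfl⟩ := mem_map.mp hw
  exact mem_cloneBags.mp hi j

variable (P)

theorem ordConnected_cloneBags (v : TreeVert s) : (P.cloneBags v).OrdConnected :=
  Set.ordConnected_iInter fun _ => P.ordConnected_support _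

theorem cloneBags_nonempty (hk : 0 < k) (v : TreeVert s) : (P.cloneBags v).Nonempty := by
  have : Nonempty (Fin k) := ⟨⟨0, hk⟩⟩
  obtain ⟨i, hi⟩ := P.exists_forall_mem_bag_of_clique (f := fun j : Fin k => .inl (v, j))
    fun i j => (eq_or_ne i j).imp (fun h : i = j => h ▸ rfl) (crossComposed_adj_clone v)
  exact ⟨i, mem_cloneBags.mpr hi⟩

theorem cloneBags_inter_nonempty_of_child (hk : 0 < k) {v w : TreeVert s} {a : Fin 3}
    (h : w.1 = v.1 ++ [a]) : (P.cloneBags v ∩ P.cloneBags w).Nonempty := by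
  have : Nonempty (Fin k) := ⟨⟨0, hk⟩⟩
  obtain ⟨i, hi⟩ := P.exists_forall_mem_bag_of_clique
    (f := Sum.elim (fun j : Fin k => .inl (v, j)) (fun j : Fin k => .inl (w, j))) <| by
      rintro (i | i) (j | j)
      · exact (eq_or_ne i j).imp (fun h : i = j => h ▸ rfl) (crossComposed_adj_clone v)
      · exact Or.inr (crossComposed_adj_clone_child h i j)
      · exact Or.inr (crossComposed_adj_clone_child h j i).symm
      · exact (eq_or_ne i j).imp (fun h : i = j => h ▸ rfl) (crossComposed_adj_clone w)
  exact ⟨i, mem_cloneBags.mpr fun j => hi (.inl j), mem_cloneBags.mpr fun j => hi (.inr j)⟩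

theorem exists_mem_cloneBags_parent_forall_gadget_mem (hk : 0 < k) (lf : LeafIdx s)
    {ι : Type*} [Finite ι] {g : ι → U} (hg : ∀ a b, g a = g b ∨ (G lf).Adj (g a) (g b)) :
    ∃ i ∈ P.cloneBags lf.parent, ∀ a, .inr (lf, g a) ∈ P.bag i := by
  have : Nonempty (Fin k) := ⟨⟨0, hk⟩⟩
  obtain ⟨i, hi⟩ := P.exists_forall_mem_bag_of_clique
    (f := Sum.elim (fun a => .inr (lf, g a)) (fun j : Fin k => .inl (lf.parent, j))) <| by
      rintro (a | i) (b | j)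
      · exact (hg a b).imp (fun h => by simp [h]) crossComposed_adj_gadget
      · exact Or.inr (crossComposed_adj_gadget_parent lf _ j)
      · exact Or.inr (crossComposed_adj_gadget_parent lf _ i).symm
      · exact (eq_or_ne i j).imp (fun h : i = j => h ▸ rfl) (crossComposed_adj_clone _)
  exact ⟨i, mem_cloneBags.mpr fun j => hi (.inr j), fun a => hi (.inl a)⟩

theorem exists_mem_cloneBags_parent_le_card_gadgetDecomp (hk : 2 ≤ k) {lf : LeafIdx s}
    (hlf : k - 1 ≤ pathwidth (G lf)) :
    ∃ i ∈ P.cloneBags lf.parent,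
      k ≤ #((P.gadgetDecomp lf).bag i) := by
  obtain ⟨i, hi, hwidth⟩ :=
    (P.gadgetDecomp lf).exists_mem_pathwidth_le_of_ordConnected
      (P.ordConnected_cloneBags lf.parent) (P.cloneBags_nonempty (by omega) lf.parent)
      (fun u => by
        obtain ⟨i, hi, hu⟩ := P.exists_mem_cloneBags_parent_forall_gadget_mem (by omega) lf
          (g := fun _ : Unit => u) (by simp)
        exact ⟨i, hi, mem_gadgetDecomp_bag.mpr (hu ())⟩)
      (fun u u' huu' => by
        obtain ⟨i, hi, hu⟩ := P.exists_mem_cloneBags_parent_forall_gadget_mem (by omega) lf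
          (g := ![u, u']) (by intro a b; fin_cases a <;> fin_cases b <;> simp [huu', huu'.symm])
        exact ⟨i, hi, mem_gadgetDecomp_bag.mpr (hu 0), mem_gadgetDecomp_bag.mpr (hu 1)⟩)
  exact ⟨i, hi, by omega⟩

theorem cloneBags_subset_subtreeCloneBags {l : List (Fin 3)} {v : TreeVert s} (h : l <+: v.1) :
    P.cloneBags v ⊆ P.subtreeCloneBags l :=
  Set.subset_biUnion_of_mem (u := fun v => P.cloneBags v) h

theorem subtreeCloneBags_anti {l l' : List (Fin 3)} (h : l <+: l') :
    P.subtreeCloneBags l' ⊆ P.subtreeCloneBags l :=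
  Set.iUnion₂_subset fun _ hv => P.cloneBags_subset_subtreeCloneBags (h.trans hv)

theorem subtreeCloneBags_of_length_eq {l : List (Fin 3)} (hl : l.length = s) :
    P.subtreeCloneBags l = P.cloneBags ⟨l, hl.le⟩ := by
  refine (Set.iUnion₂_subset fun v hv => ?_).antisymm
    (P.cloneBags_subset_subtreeCloneBags List.prefix_rfl)
  obtain rfl : l = v.1 := hv.eq_of_length (by have := hv.length_le; have := v.2; omega)
  rfl

theorem subtreeCloneBags_eq_union {l : List (Fin 3)} (hl : l.length < s) :
    P.subtreeCloneBags l = P.cloneBags ⟨l, hl.le⟩ ∪ ⋃ a, P.subtreeCloneBags (l ++ [a]) := by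
  refine (Set.iUnion₂_subset fun v hv => ?_).antisymm <| Set.union_subset
    (P.cloneBags_subset_subtreeCloneBags List.prefix_rfl)
    (Set.iUnion_subset fun a => P.subtreeCloneBags_anti (List.prefix_append _ _))
  rcases hv.eq_or_append_singleton_prefix with hvl | ⟨a, ha⟩
  · obtain rfl : v = ⟨l, hl.le⟩ := Subtype.ext hvl
    exact Set.subset_union_left
  · exact (P.cloneBags_subset_subtreeCloneBags ha).trans
      ((Set.subset_iUnion (fun a => P.subtreeCloneBags (l ++ [a])) a).trans
        Set.subset_union_right)

theorem ordConnected_subtreeCloneBags (hk : 0 < k) {l : List (Fin 3)} (hl : l.length ≤ s) :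
    (P.subtreeCloneBags l).OrdConnected := by
  obtain ⟨d, hd⟩ := Nat.exists_eq_add_of_le hl
  induction d generalizing l with
  | zero =>
    rw [P.subtreeCloneBags_of_length_eq hd.symm]
    exact P.ordConnected_cloneBags _
  | succ d ih =>
    rw [P.subtreeCloneBags_eq_union (by omega)]
    refine (P.ordConnected_cloneBags _).union_iUnion
      (fun a => ih (by simp; omega) (by simp; omega)) fun a => ?_
    exact (P.cloneBags_inter_nonempty_of_child hk (w := ⟨l ++ [a], by simp; omega⟩) rfl).mono
      (Set.inter_subset_inter_right _ (P.cloneBags_subset_subtreeCloneBags List.prefix_rfl))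

theorem exists_mem_cloneBags_off_branch (hk : 0 < k) {l : List (Fin 3)} (hl : l.length < s)
    {x : Fin 3 → Fin P.n} (hx : ∀ a, x a ∈ P.subtreeCloneBags (l ++ [a])) :
    ∃ a, ∃ v : TreeVert s, l <+: v.1 ∧ ¬ l ++ [a] <+: v.1 ∧ x a ∈ P.cloneBags v := by
  -- `σ 1` is the child whose bag `x (σ 1)` lies between the two others.
  set σ := Tuple.sort x
  let node : TreeVert s := ⟨l, hl.le⟩
  have hchild a : (P.subtreeCloneBags (l ++ [a])).OrdConnected :=
    P.ordConnected_subtreeCloneBags hk (by simp; omega)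
  have hmeet a : (P.cloneBags node ∩ P.subtreeCloneBags (l ++ [a])).Nonempty :=
    (P.cloneBags_inter_nonempty_of_child hk (w := ⟨l ++ [a], by simp; omega⟩) rfl).mono
      (Set.inter_subset_inter_right _ (P.cloneBags_subset_subtreeCloneBags List.prefix_rfl))
  have hS : (P.cloneBags node ∪ P.subtreeCloneBags (l ++ [σ 0]) ∪
      P.subtreeCloneBags (l ++ [σ 2])).OrdConnected :=
    ((P.ordConnected_cloneBags node).union_of_inter_nonempty (hchild _) (hmeet _)
      ).union_of_inter_nonempty (hchild _)
      ((hmeet _).mono (Set.inter_subset_inter_left _ Set.subset_union_left))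
  have hmid := hS.out (Or.inl (Or.inr (hx (σ 0)))) (Or.inr (hx (σ 2)))
    ⟨Tuple.monotone_sort x (by decide : (0 : Fin 3) ≤ 1),
      Tuple.monotone_sort x (by decide : (1 : Fin 3) ≤ 2)⟩
  have hoff {b : Fin 3} (hb : b ≠ 1) {v : TreeVert s} (hv : l ++ [σ b] <+: v.1) :
      ¬ l ++ [σ 1] <+: v.1 := fun h =>
    hb (σ.injective (List.eq_of_append_singleton_prefix hv h))
  refine ⟨σ 1, ?_⟩
  rcases hmid with (h | h) | h
  · exact ⟨node, List.prefix_rfl, fun h => by simpa [node] using h.length_le, h⟩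
  · obtain ⟨v, hv, hxv⟩ := Set.mem_iUnion₂.mp h
    exact ⟨v, (List.prefix_append _ _).trans hv, hoff (by decide) hv, hxv⟩
  · obtain ⟨v, hv, hxv⟩ := Set.mem_iUnion₂.mp h
    exact ⟨v, (List.prefix_append _ _).trans hv, hoff (by decide) hv, hxv⟩

theorem card_bagInSubtree_append_add_le {l : List (Fin 3)} {a : Fin 3} {v : TreeVert s}
    {i : Fin P.n} (hi : i ∈ P.cloneBags v) (hlv : l <+: v.1) (hav : ¬ l ++ [a] <+: v.1) :
    #(P.bagInSubtree (l ++ [a]) i) + k ≤ #(P.bagInSubtree l i) := by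
  classical
  have hdisj : Disjoint (P.bagInSubtree (l ++ [a]) i) (clones v) :=
    disjoint_right.mpr fun w hw hwa => hav (treeAddr_of_mem_clones hw ▸ (mem_filter.mp hwa).2)
  calc #(P.bagInSubtree (l ++ [a]) i) + k = #(P.bagInSubtree (l ++ [a]) i ∪ clones v) := by
        rw [card_union_of_disjoint hdisj, card_clones]
    _ ≤ #(P.bagInSubtree l i) := card_le_card <| union_subset
        (fun w hw => mem_filter.mpr
          ⟨(mem_filter.mp hw).1, (List.prefix_append _ _).trans (mem_filter.mp hw).2⟩)
        (fun w hw =>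
          mem_filter.mpr ⟨clones_subset_bag hi hw, treeAddr_of_mem_clones hw ▸ hlv⟩)

theorem card_gadgetDecomp_bag_add_le {lf : LeafIdx s} {i : Fin P.n}
    (hi : i ∈ P.cloneBags lf.parent) :
    #((P.gadgetDecomp lf).bag i) + k ≤ #(P.bagInSubtree lf.1 i) := by
  classical
  set gadgets := ((P.gadgetDecomp lf).bag i).map
    ⟨gadgetHom (k := k) (G := G) lf, gadgetHom_injective lf⟩
  have hdisj : Disjoint gadgets (clones lf.parent) := by
    refine disjoint_left.mpr fun w hw hwc => ?_
    obtain ⟨u, -, rfl⟩ := mem_map.mp hw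
    obtain ⟨j, -, hj⟩ := mem_map.mp hwc
    exact Sum.inl_ne_inr hj
  calc #((P.gadgetDecomp lf).bag i) + k
        = #(gadgets ∪ clones lf.parent) := by
        rw [card_union_of_disjoint hdisj, card_clones, card_map]
    _ ≤ #(P.bagInSubtree lf.1 i) := card_le_card <| union_subset
        (fun w hw => by
          obtain ⟨u, hu, rfl⟩ := mem_map.mp hw
          exact mem_filter.mpr ⟨mem_gadgetDecomp_bag.mp hu, List.prefix_rfl⟩)
        (fun w hw => mem_filter.mpr
          ⟨clones_subset_bag hi hw, (treeAddr_of_mem_clones hw).symm ▸ List.prefix_rfl⟩)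

theorem exists_mem_subtreeCloneBags_le_card (hk : 0 < k)
    (hleaf : ∀ lf : LeafIdx s, ∃ i ∈ P.cloneBags lf.parent,
      k ≤ #((P.gadgetDecomp lf).bag i))
    {l : List (Fin 3)} {d : ℕ} (hld : l.length + d = s) :
    ∃ i ∈ P.subtreeCloneBags l, k * (d + 2) ≤ #(P.bagInSubtree l i) := by
  induction d generalizing l with
  | zero =>
    obtain ⟨i, hi, hcard⟩ := hleaf ⟨l, hld⟩
    have hsub : #((P.gadgetDecomp ⟨l, hld⟩).bag i) + k ≤ #(P.bagInSubtree l i) :=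
      P.card_gadgetDecomp_bag_add_le hi
    exact ⟨i, P.cloneBags_subset_subtreeCloneBags List.prefix_rfl hi, by omega⟩
  | succ d ih =>
    choose x hx hcard using fun a : Fin 3 => ih (l := l ++ [a]) (by simp; omega)
    obtain ⟨a, v, hlv, hav, hxv⟩ := P.exists_mem_cloneBags_off_branch hk (by omega) hx
    have := P.card_bagInSubtree_append_add_le hxv hlv hav
    refine ⟨x a, P.subtreeCloneBags_anti (List.prefix_append _ _) (hx a), ?_⟩
    linarith [hcard a]

end PathDecomp

/-- If every input graph `G_i` has pathwidth at least `k − 1`, then the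
cross-composed graph `G'` has pathwidth at least `k(s + 2) − 1`. -/
theorem crossComposed_pathwidth_ge (s k : ℕ) (hk : 2 ≤ k) {U : Type} [Fintype U]
    (G : LeafIdx s → SimpleGraph U)
    (hno : ∀ i : LeafIdx s, k - 1 ≤ pathwidth (G i)) :
    k * (s + 2) - 1 ≤ pathwidth (crossComposed s k G) := by
  refine PathDecomp.le_pathwidth_of_forall_le_width fun P => ?_
  obtain ⟨i, -, hi⟩ := P.exists_mem_subtreeCloneBags_le_card (by omega)
    (fun lf => P.exists_mem_cloneBags_parent_le_card_gadgetDecomp hk (hno lf))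
    (l := []) (d := s) (by simp)
  calc k * (s + 2) - 1 ≤ #(P.bag i) - 1 :=
        Nat.sub_le_sub_right (hi.trans (card_filter_le _ _)) 1
    _ ≤ P.width := P.card_bag_sub_one_le_width i
end
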